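/- Let P be a Poisson algebra over a field of characteristic zero with Poisson commutator filtration F (F_0 P = P, F_{n+1} P = Σ_{i=1}^{n} F_i P · F_{n+1-i} P + Σ_{i=0}^{n} ⟨{F_i P, F_{n-i} P}⟩), and suppose F_{d+1} P = 0. Let f : P → P be a Poisson algebra endomorphism such that the induced map on P / F_1 P is the identity. Then f restricted to F_d P is the identity. -/
import Mathlib


/-- A Poisson bracket on a commutative `k`-algebra `P`: a bilinear Lie bracket
satisfying the Leibniz rule `{a, bc} = {a,b}c + b{a,c}`. -/
structure PoissonStructure (k : Type) [Field k]
    (P : Type) [CommRing P] [Algebra k P] : Type where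
  bracket : P →ₗ[k] P →ₗ[k] P
  bracket_self : ∀ a : P, bracket a a = 0
  jacobi : ∀ a b c : P,
    bracket a (bracket b c) = bracket (bracket a b) c + bracket b (bracket a c)
  leibniz : ∀ a b c : P, bracket a (b * c) = bracket a b * c + b * bracket a c

variable (k : Type) [Field k] [CharZero k]
variable (P : Type) [CommRing P] [Algebra k P]

/-- The ideal (as a `k`-submodule) generated by a set in the commutative ring `P`. -/
def pIdealGen (S : Set P) : Submodule k P :=
  Submodule.span k {x | ∃ a s, s ∈ S ∧ x = a * s}

/-- The ideal generated by the Poisson brackets of elements of two submodules. -/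
def pBrIdeal (pb : PoissonStructure k P) (M N : Submodule k P) : Submodule k P :=
  pIdealGen k P {x | ∃ m ∈ M, ∃ n ∈ N, x = pb.bracket m n}

/-- The Poisson commutator filtration:
`F 0 = P`, `F (n+1) = Σ_{i=1}^n F i * F (n+1-i) + Σ_{i=0}^n ⟨{F i, F (n-i)}⟩`. -/
def poissonFilt (pb : PoissonStructure k P) : ℕ → Submodule k P
  | 0 => ⊤
  | n + 1 =>
      ((Finset.Icc 1 n).attach.sum fun p =>
          poissonFilt pb p.1 * poissonFilt pb (n + 1 - p.1)) +
      ((Finset.range (n + 1)).attach.sum fun p =>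
          pBrIdeal k P pb (poissonFilt pb p.1) (poissonFilt pb (n - p.1)))
  decreasing_by
  · have := Finset.mem_Icc.mp p.2; omega
  · have := Finset.mem_Icc.mp p.2; omega
  · have := Finset.mem_range.mp p.2; omega
  · have := Finset.mem_range.mp p.2; omega

set_option linter.unusedSectionVars false

lemma filt_succ (pb : PoissonStructure k P) (n : ℕ) :
    poissonFilt k P pb (n+1) =
      (∑ i ∈ Finset.Icc 1 n, poissonFilt k P pb i * poissonFilt k P pb (n + 1 - i)) +
      (∑ i ∈ Finset.range (n + 1),
          pBrIdeal k P pb (poissonFilt k P pb i) (poissonFilt k P pb (n - i))) := by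
  rw [poissonFilt]
  rw [Finset.sum_attach (Finset.Icc 1 n)
      (fun i => poissonFilt k P pb i * poissonFilt k P pb (n + 1 - i)),
    Finset.sum_attach (Finset.range (n+1))
      (fun i => pBrIdeal k P pb (poissonFilt k P pb i) (poissonFilt k P pb (n - i)))]

lemma le_psum {ι : Type} {s : Finset ι} (M : ι → Submodule k P) {i : ι} (hi : i ∈ s) :
    M i ≤ ∑ j ∈ s, M j := by
  classical
  induction s using Finset.induction with
  | empty => simp at hi
  | @insert a t hat ih =>
    rw [Finset.sum_insert hat, Submodule.add_eq_sup]
    rcases Finset.mem_insert.mp hi with h | h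
    · exact h ▸ le_sup_left
    · exact le_trans (ih h) le_sup_right

lemma psum_le {ι : Type} {s : Finset ι} {M : ι → Submodule k P} {N : Submodule k P}
    (h : ∀ i ∈ s, M i ≤ N) : (∑ i ∈ s, M i) ≤ N := by
  classical
  induction s using Finset.induction with
  | empty => simp
  | @insert a t hat ih =>
    rw [Finset.sum_insert hat, Submodule.add_eq_sup]
    exact sup_le (h _ (by simp)) (ih fun i hi => h i (by simp [hi]))

lemma mul_le_filt (pb : PoissonStructure k P) {n i : ℕ} (hi : i ∈ Finset.Icc 1 n) :
    poissonFilt k P pb i * poissonFilt k P pb (n + 1 - i) ≤ poissonFilt k P pb (n+1) := by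
  rw [filt_succ, Submodule.add_eq_sup]
  exact le_trans
    (le_psum k P (fun j => poissonFilt k P pb j * poissonFilt k P pb (n + 1 - j)) hi)
    le_sup_left

lemma br_le_filt (pb : PoissonStructure k P) {n i : ℕ} (hi : i ∈ Finset.range (n+1)) :
    pBrIdeal k P pb (poissonFilt k P pb i) (poissonFilt k P pb (n - i)) ≤
      poissonFilt k P pb (n+1) := by
  rw [filt_succ, Submodule.add_eq_sup]
  exact le_trans
    (le_psum k P (fun j => pBrIdeal k P pb (poissonFilt k P pb j) (poissonFilt k P pb (n - j))) hi)
    le_sup_right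

lemma br_mem (pb : PoissonStructure k P) {M N : Submodule k P} (a : P) {m n : P}
    (hm : m ∈ M) (hn : n ∈ N) : a * pb.bracket m n ∈ pBrIdeal k P pb M N :=
  Submodule.subset_span ⟨a, pb.bracket m n, ⟨m, hm, n, hn, rfl⟩, rfl⟩

lemma filt_map (pb : PoissonStructure k P) (f : P →ₐ[k] P)
    (hbr : ∀ x y : P, f (pb.bracket x y) = pb.bracket (f x) (f y)) :
    ∀ n, ∀ x ∈ poissonFilt k P pb n, f x ∈ poissonFilt k P pb n := by
  intro n
  induction n using Nat.strong_induction_on with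
  | _ n ih =>
    match n with
    | 0 => intro x _; rw [show poissonFilt k P pb 0 = ⊤ from by rw [poissonFilt]]; exact Submodule.mem_top
    | Nat.succ n =>
      suffices h : poissonFilt k P pb (n+1) ≤
          Submodule.comap f.toLinearMap (poissonFilt k P pb (n+1)) from fun x hx => h hx
      conv_lhs => rw [filt_succ]
      rw [Submodule.add_eq_sup]
      refine sup_le (psum_le k P ?_) (psum_le k P ?_)
      · intro i hi
        refine Submodule.mul_le.mpr fun m hm y hy => ?_
        simp only [Submodule.mem_comap, AlgHom.toLinearMap_apply, map_mul]
        exact mul_le_filt k P pb hi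
          (Submodule.mul_mem_mul
            (ih i (by have := Finset.mem_Icc.mp hi; omega) m hm)
            (ih (n+1-i) (by have := Finset.mem_Icc.mp hi; omega) y hy))
      · intro i hi
        refine Submodule.span_le.mpr ?_
        rintro x ⟨a, s, ⟨m, hm, y, hy, rfl⟩, rfl⟩
        simp only [SetLike.mem_coe, Submodule.mem_comap, AlgHom.toLinearMap_apply,
          map_mul, hbr]
        exact br_le_filt k P pb hi
          (br_mem k P pb (f a)
            (ih i (by have := Finset.mem_range.mp hi; omega) m hm)
            (ih (n-i) (by have := Finset.mem_range.mp hi; omega) y hy))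

lemma filt_diff (pb : PoissonStructure k P) (f : P →ₐ[k] P)
    (hbr : ∀ x y : P, f (pb.bracket x y) = pb.bracket (f x) (f y))
    (hf : ∀ r : P, f r - r ∈ poissonFilt k P pb 1) :
    ∀ n, ∀ x ∈ poissonFilt k P pb n, f x - x ∈ poissonFilt k P pb (n + 1) := by
  intro n
  induction n using Nat.strong_induction_on with
  | _ n ih =>
    match n with
    | 0 => intro x _; exact hf x
    | Nat.succ n =>
      suffices h : poissonFilt k P pb (n+1) ≤
          Submodule.comap ((f.toLinearMap - LinearMap.id : P →ₗ[k] P))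
            (poissonFilt k P pb (n+2)) by
        intro x hx
        have := h hx
        simpa using this
      conv_lhs => rw [filt_succ]
      rw [Submodule.add_eq_sup]
      refine sup_le (psum_le k P ?_) (psum_le k P ?_)
      · intro i hi
        obtain ⟨hi1, hi2⟩ := Finset.mem_Icc.mp hi
        refine Submodule.mul_le.mpr fun m hm y hy => ?_
        simp only [Submodule.mem_comap, LinearMap.sub_apply, AlgHom.toLinearMap_apply,
          LinearMap.id_apply, map_mul]
        have key : f m * f y - m * y = (f m - m) * f y + m * (f y - y) := by ring
        rw [key]
        refine Submodule.add_mem _ ?_ ?_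
        · have h1 : f m - m ∈ poissonFilt k P pb (i+1) := ih i (by omega) m hm
          have h2 : f y ∈ poissonFilt k P pb (n+1-i) := filt_map k P pb f hbr (n+1-i) y hy
          have hmem : i + 1 ∈ Finset.Icc 1 (n+1) := Finset.mem_Icc.mpr (by omega)
          have hle := mul_le_filt k P pb (n := n+1) hmem
          have harith : n + 1 + 1 - (i + 1) = n + 1 - i := by omega
          rw [harith] at hle
          exact hle (Submodule.mul_mem_mul h1 h2)
        · have h1 : f y - y ∈ poissonFilt k P pb (n+1-i+1) := ih (n+1-i) (by omega) y hy
          have hmem : i ∈ Finset.Icc 1 (n+1) := Finset.mem_Icc.mpr (by omega)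
          have hle := mul_le_filt k P pb (n := n+1) hmem
          have harith : n + 1 + 1 - i = n + 1 - i + 1 := by omega
          rw [harith] at hle
          exact hle (Submodule.mul_mem_mul hm h1)
      · intro i hi
        have hi' : i ≤ n := by have := Finset.mem_range.mp hi; omega
        refine Submodule.span_le.mpr ?_
        rintro x ⟨a, s, ⟨m, hm, y, hy, rfl⟩, rfl⟩
        simp only [SetLike.mem_coe, Submodule.mem_comap, LinearMap.sub_apply,
          AlgHom.toLinearMap_apply, LinearMap.id_apply, map_mul, hbr]
        have hfm := filt_map k P pb f hbr i m hm
        have hfy := filt_map k P pb f hbr (n-i) y hy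
        have key : f a * pb.bracket (f m) (f y) - a * pb.bracket m y =
            (f a - a) * pb.bracket (f m) (f y)
            + a * pb.bracket (f m - m) (f y)
            + a * pb.bracket m (f y - y) := by
          simp only [map_sub, LinearMap.sub_apply]
          ring
        rw [key]
        refine Submodule.add_mem _ (Submodule.add_mem _ ?_ ?_) ?_
        · have hb : pb.bracket (f m) (f y) ∈ poissonFilt k P pb (n+1) := by
            have h0 := br_mem k P pb (1 : P) hfm hfy
            rw [one_mul] at h0
            exact br_le_filt k P pb hi h0
          have hmem : 1 ∈ Finset.Icc 1 (n+1) := Finset.mem_Icc.mpr (by omega)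
          have hle := mul_le_filt k P pb (n := n+1) hmem
          have harith : n + 1 + 1 - 1 = n + 1 := by omega
          rw [harith] at hle
          exact hle (Submodule.mul_mem_mul (hf a) hb)
        · have h1 : f m - m ∈ poissonFilt k P pb (i+1) := ih i (by omega) m hm
          have hmem : i + 1 ∈ Finset.range (n+1+1) := Finset.mem_range.mpr (by omega)
          have hle := br_le_filt k P pb (n := n+1) hmem
          have harith : n + 1 - (i + 1) = n - i := by omega
          rw [harith] at hle
          exact hle (br_mem k P pb a h1 hfy)
        · have h1 : f y - y ∈ poissonFilt k P pb (n-i+1) := ih (n-i) (by omega) y hy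
          have hmem : i ∈ Finset.range (n+1+1) := Finset.mem_range.mpr (by omega)
          have hle := br_le_filt k P pb (n := n+1) hmem
          have harith : n + 1 - i = n - i + 1 := by omega
          rw [harith] at hle
          exact hle (br_mem k P pb a hm h1)

/-- Lemma 3.1: if `P` is a nil-Poisson algebra of order `d`
(`F_{d+1} P = 0`) and the Poisson endomorphism `f` induces the identity on
`P / F_1 P`, then `f` is the identity on `F_d P`. -/
theorem poisson_endo_id_on_Fd (pb : PoissonStructure k P)
    (d : ℕ) (hnil : poissonFilt k P pb (d + 1) = ⊥)
    (f : P →ₐ[k] P)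
    (hbr : ∀ x y : P, f (pb.bracket x y) = pb.bracket (f x) (f y))
    (hf : ∀ r : P, f r - r ∈ poissonFilt k P pb 1) :
    ∀ x ∈ poissonFilt k P pb d, f x = x := by
  intro x hx
  have := filt_diff k P pb f hbr hf d x hx
  rw [hnil, Submodule.mem_bot, sub_eq_zero] at this
  exact this
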